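/- arXiv:1905.04352 — 6 statements merged into one kernel-verified Lean document; each statement's English description precedes it below -/
import Mathlib

section
/- For any ε > 0, the number of integer solutions (a, b, c) of the system b + c - a = m, b² + c² - a² = n (with m, n fixed and with no pairing, i.e. 2(m-b)(m-c) = m² - n ≠ 0) satisfying |a| ~ N1, |b| ~ N2, |c| ~ N3 is O_ε(N^ε), where N is the second largest of N1, N2, N3. -/
/-!
Put `x = m - b` and `y = m - c`. The two equations say `a = b + c - m` and `2 x y = K`, where
`K = m ^ 2 - n ≠ 0`, so a solution is determined by the divisor `x` of `K`, and the divisor bound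
`τ(K) = O(K ^ (ε / 4))` settles the case `|K| ≲ N ^ 4`.

If `|K| ≫ N ^ 4`, two of `a, b, c` are `O(N)`. If `a` and `b` are (the case of `a` and `c` is
symmetric), then `y = b - a` is `O(N)` while `x` varies by at most `O(N)` between solutions; two
factorizations `x y = x' y'` of the large number `K / 2` with these constraints coincide. If `b` and
`c` are, then `s = m - a` and `t = c - b` satisfy `s ^ 2 - t ^ 2 = 2 K` with `t = O(N)`; since `K` is
large this pins down `|s|` and `|t|`, leaving at most nine sign patterns.
-/

open Finset Real

section DivisorBound

variable {ε : ℝ}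

lemma natCast_add_one_le_mul_two_rpow (hε : 0 < ε) (a : ℕ) :
    (a : ℝ) + 1 ≤ (1 + 1 / (ε * log 2)) * 2 ^ (a * ε) := by
  have hlog : 0 < log 2 := log_pos one_lt_two
  have hexp : 1 + log 2 * (a * ε) ≤ (2 : ℝ) ^ (a * ε) := by
    rw [rpow_def_of_pos two_pos]
    linarith [add_one_le_exp (log 2 * (a * ε))]
  calc (a : ℝ) + 1 ≤ (1 + 1 / (ε * log 2)) * (1 + log 2 * (a * ε)) := by
        have hexpand : (1 + 1 / (ε * log 2)) * (1 + log 2 * (a * ε))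
            = a + 1 + log 2 * (a * ε) + 1 / (ε * log 2) := by
          field_simp
          ring
        rw [hexpand]
        have : 0 ≤ log 2 * (a * ε) := by positivity
        have : 0 ≤ 1 / (ε * log 2) := by positivity
        linarith
    _ ≤ _ := by gcongr

lemma natCast_add_one_le_rpow_of_two_rpow_inv_le (hε : 0 < ε) {p : ℝ} (hp : 2 ^ ε⁻¹ ≤ p)
    (a : ℕ) : (a : ℝ) + 1 ≤ p ^ (a * ε) := calc
  (a : ℝ) + 1 ≤ 2 ^ a := by exact_mod_cast Nat.lt_two_pow_self
  _ = ((2 : ℝ) ^ ε⁻¹) ^ (a * ε) := by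
    rw [← rpow_mul zero_le_two, ← rpow_natCast, mul_comm (a : ℝ), inv_mul_cancel_left₀ hε.ne']
  _ ≤ p ^ (a * ε) := by gcongr

theorem Nat.exists_card_divisors_le_mul_rpow (hε : 0 < ε) :
    ∃ C : ℝ, 0 < C ∧ ∀ n : ℕ, n ≠ 0 → (#n.divisors : ℝ) ≤ C * n ^ ε := by
  set B : ℝ := 1 + 1 / (ε * Real.log 2)
  have hB : 1 ≤ B := le_add_of_nonneg_right (by have := Real.log_pos one_lt_two; positivity)
  set P := ⌈(2 : ℝ) ^ ε⁻¹⌉₊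
  refine ⟨B ^ P, by positivity, fun n hn => ?_⟩
  -- only the primes below `2 ^ ε⁻¹` cost a factor `B`
  let f : ℕ → ℝ := fun p => if (p : ℝ) < 2 ^ ε⁻¹ then B else 1
  have hprime : ∀ p ∈ n.primeFactors,
      (n.factorization p : ℝ) + 1 ≤ f p * ((p : ℝ) ^ n.factorization p) ^ ε := by
    intro p hp
    have hp2 : (2 : ℝ) ≤ p := by exact_mod_cast (Nat.prime_of_mem_primeFactors hp).two_le
    rw [← rpow_natCast, ← rpow_mul (by positivity)]
    by_cases hsmall : (p : ℝ) < 2 ^ ε⁻¹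
    · simp only [f, if_pos hsmall]
      refine (natCast_add_one_le_mul_two_rpow hε _).trans ?_
      gcongr
    · simp only [f, if_neg hsmall, one_mul]
      exact natCast_add_one_le_rpow_of_two_rpow_inv_le hε (not_lt.mp hsmall) _
  have hprod : ∏ p ∈ n.primeFactors, f p ≤ B ^ P := by
    rw [prod_ite, prod_const, prod_const_one, mul_one]
    refine pow_le_pow_right₀ hB ((card_le_card fun p hp => ?_).trans (card_range P).le)
    exact mem_range.mpr (Nat.lt_ceil.mpr (mem_filter.mp hp).2)
  calc (#n.divisors : ℝ) = ∏ p ∈ n.primeFactors, ((n.factorization p : ℝ) + 1) := by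
        rw [Nat.card_divisors hn]; push_cast; rfl
    _ ≤ ∏ p ∈ n.primeFactors, f p * ((p : ℝ) ^ n.factorization p) ^ ε :=
        prod_le_prod (fun _ _ => by positivity) hprime
    _ = (∏ p ∈ n.primeFactors, f p) * (n : ℝ) ^ ε := by
        rw [prod_mul_distrib, finsetProd_rpow _ _ (fun _ _ => by positivity)]
        congr
        exact_mod_cast Nat.prod_factorization_pow_eq_self hn
    _ ≤ B ^ P * (n : ℝ) ^ ε := by gcongr

end DivisorBound

lemma Int.card_divisors (z : ℤ) : #z.divisors = 2 * #z.natAbs.divisors := by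
  rw [Int.divisors, card_disjUnion, card_map, card_map, two_mul]

lemma eq_and_eq_of_mul_eq_mul_of_abs_lt {d e d' e' : ℤ} {L : ℝ} (h : d * e = d' * e')
    (hd : |(d : ℝ)| < L) (hd' : |(d' : ℝ)| < L) (he : |(e : ℝ) - e'| < L)
    (hL : L ^ 3 ≤ |(d : ℝ) * e|) : d = d' ∧ e = e' := by
  have hde : d * e ≠ 0 := by
    intro h0
    have h0R : (d : ℝ) * e = 0 := by exact_mod_cast h0
    rw [h0R, abs_zero] at hL
    exact (pow_pos ((abs_nonneg _).trans_lt hd) 3).not_ge hL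
  suffices e = e' by
    subst this
    exact ⟨mul_right_cancel₀ (right_ne_zero_of_mul hde) h, rfl⟩
  by_contra hne
  have hdd : d ≠ d' := by
    rintro rfl
    exact hne (mul_left_cancel₀ (left_ne_zero_of_mul hde) h)
  -- `e' * (d' - d) = (e - e') * d` with `d' - d ≠ 0`, so `e'` is small as well
  have he' : |e'| ≤ |e - e'| * |d| := calc
    |e'| ≤ |e'| * |d' - d| :=
      le_mul_of_one_le_right (abs_nonneg _) (Int.one_le_abs (sub_ne_zero.mpr hdd.symm))
    _ = |e - e'| * |d| := by rw [← abs_mul, ← abs_mul]; congr 1; linear_combination -h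
  have he'R : |(e' : ℝ)| ≤ |(e : ℝ) - e'| * |(d : ℝ)| := by exact_mod_cast he'
  have : |(d : ℝ) * e| < L ^ 3 := calc
    |(d : ℝ) * e| = |(d' : ℝ)| * |(e' : ℝ)| := by rw [← abs_mul]; exact_mod_cast congrArg abs h
    _ < L * (L * L) := by
      refine mul_lt_mul'' hd' (he'R.trans_lt ?_) (abs_nonneg _) (abs_nonneg _)
      exact mul_lt_mul'' he hd (abs_nonneg _) (abs_nonneg _)
    _ = L ^ 3 := by ring
  linarith

lemma abs_eq_abs_of_sq_sub_sq_eq {s t s' t' : ℤ} {L : ℝ} (h : s ^ 2 - t ^ 2 = s' ^ 2 - t' ^ 2)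
    (ht : |(t : ℝ)| < L) (ht' : |(t' : ℝ)| < L) (hL1 : 1 ≤ L)
    (hL : L ^ 4 ≤ |(s : ℝ) ^ 2 - t ^ 2|) : |s| = |s'| ∧ |t| = |t'| := by
  have hL2 : L ^ 2 ≤ L ^ 4 := pow_le_pow_right₀ hL1 (by norm_num)
  have htL : (t : ℝ) ^ 2 < L ^ 2 := sq_lt_sq' (abs_lt.mp ht).1 (abs_lt.mp ht).2
  have ht'L : (t' : ℝ) ^ 2 < L ^ 2 := sq_lt_sq' (abs_lt.mp ht').1 (abs_lt.mp ht').2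
  have hD : L ^ 4 ≤ (s : ℝ) ^ 2 - t ^ 2 := by
    rcases abs_cases ((s : ℝ) ^ 2 - t ^ 2) with ⟨habs, -⟩ | ⟨habs, -⟩
    · rwa [habs] at hL
    · nlinarith [sq_nonneg (s : ℝ)]
  have hR : (s : ℝ) ^ 2 - s' ^ 2 = t ^ 2 - t' ^ 2 := by
    have : (s : ℝ) ^ 2 - t ^ 2 = s' ^ 2 - t' ^ 2 := by exact_mod_cast h
    linarith
  have hs : |s| = |s'| := by
    by_contra hne
    have h1 : |s| + |s'| ≤ |s ^ 2 - s' ^ 2| := calc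
      |s| + |s'| ≤ abs (|s| - |s'|) * (|s| + |s'|) :=
        le_mul_of_one_le_left (by positivity) (Int.one_le_abs (sub_ne_zero.mpr hne))
      _ = |(|s| - |s'|) * (|s| + |s'|)| := by
        rw [abs_mul, abs_of_nonneg (add_nonneg (abs_nonneg s) (abs_nonneg s'))]
      _ = |s ^ 2 - s' ^ 2| := by congr 1; linear_combination sq_abs s - sq_abs s'
    have h1R : |(s : ℝ)| + |(s' : ℝ)| ≤ |(s : ℝ) ^ 2 - s' ^ 2| := by exact_mod_cast h1
    -- `|s| + |s'| ≥ L ^ 2` while `|s ^ 2 - s' ^ 2| = |t ^ 2 - t' ^ 2| < L ^ 2`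
    have h2 : L ^ 2 ≤ |(s : ℝ)| + |(s' : ℝ)| := by
      refine abs_le_of_sq_le_sq' ?_ (by positivity) |>.2
      nlinarith [sq_abs (s : ℝ), sq_abs (s' : ℝ), abs_nonneg (s : ℝ), abs_nonneg (s' : ℝ),
        mul_nonneg (abs_nonneg (s : ℝ)) (abs_nonneg (s' : ℝ)), sq_nonneg (t' : ℝ)]
    have h3 : |(s : ℝ) ^ 2 - s' ^ 2| < L ^ 2 := by
      rw [hR, abs_sub_lt_iff]
      constructor <;> nlinarith [sq_nonneg (t : ℝ), sq_nonneg (t' : ℝ)]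
    linarith
  refine ⟨hs, (sq_eq_sq_iff_abs_eq_abs _ _).mp ?_⟩
  have := (sq_eq_sq_iff_abs_eq_abs s s').mpr hs
  linarith

def solutions (m n : ℤ) : Set (ℤ × ℤ × ℤ) :=
  {p | p.2.1 + p.2.2 - p.1 = m ∧ p.2.1 ^ 2 + p.2.2 ^ 2 - p.1 ^ 2 = n}

section Solutions

variable {m n : ℤ}

lemma mem_solutions {a b c : ℤ} :
    (a, b, c) ∈ solutions m n ↔ b + c - a = m ∧ b ^ 2 + c ^ 2 - a ^ 2 = n :=
  Iff.rfl

lemma two_mul_sub_mul_sub_eq {a b c : ℤ} (h1 : b + c - a = m) (h2 : b ^ 2 + c ^ 2 - a ^ 2 = n) :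
    2 * (m - b) * (m - c) = m ^ 2 - n := by
  linear_combination (a + b + c - m) * h1 - h2

lemma sub_sq_sub_sub_sq_eq {a b c : ℤ} (h1 : b + c - a = m) (h2 : b ^ 2 + c ^ 2 - a ^ 2 = n) :
    (m - a) ^ 2 - (c - b) ^ 2 = 2 * (m ^ 2 - n) := by
  linear_combination (b + c + m + a) * h1 - 2 * h2

lemma ncard_le_card_divisors {S : Set (ℤ × ℤ × ℤ)} (hS : S ⊆ solutions m n) (hK : m ^ 2 - n ≠ 0) :
    S.ncard ≤ #(m ^ 2 - n).divisors := by
  have hfac : ∀ p ∈ S, 2 * (m - p.2.1) * (m - p.2.2) = m ^ 2 - n :=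
    fun p hp => two_mul_sub_mul_sub_eq (hS hp).1 (hS hp).2
  refine (Set.ncard_le_ncard_of_injOn (fun p => m - p.2.1) (fun p hp => ?_) ?_
    (finite_toSet _)).trans (Set.ncard_coe_finset _).le
  · exact Int.mem_divisors.mpr ⟨⟨2 * (m - p.2.2), by linear_combination -hfac p hp⟩, hK⟩
  · rintro ⟨a, b, c⟩ hp ⟨a', b', c'⟩ hp' (hb : m - b = m - b')
    have hb0 : 2 * (m - b) ≠ 0 := fun h0 => hK (by rw [← hfac _ hp, h0, zero_mul])
    have hc : m - c = m - c' := mul_left_cancel₀ hb0 ((hfac _ hp).trans (hb ▸ hfac _ hp').symm)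
    have := (mem_solutions.mp (hS hp)).1
    have := (mem_solutions.mp (hS hp')).1
    simp only [Prod.mk.injEq]
    omega

lemma abs_sub_lt_of_abs_lt_two_mul {x y N : ℝ} (hx : |x| < 2 * N) (hy : |y| < 2 * N) :
    |x - y| < 4 * N := by
  linarith [abs_sub x y]

lemma subsingleton_of_abs_fst_lt_of_abs_snd_lt {S : Set (ℤ × ℤ × ℤ)} (hS : S ⊆ solutions m n)
    {N : ℝ} (hN : 1 ≤ N) (hK : 128 * N ^ 4 < |((m ^ 2 - n : ℤ) : ℝ)|)
    (hsmall : ∀ p ∈ S, |(p.1 : ℝ)| < 2 * N ∧ |(p.2.1 : ℝ)| < 2 * N) : S.Subsingleton := by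
  rintro ⟨a, b, c⟩ hp ⟨a', b', c'⟩ hp'
  obtain ⟨h1, h2⟩ := mem_solutions.mp (hS hp)
  obtain ⟨h1', h2'⟩ := mem_solutions.mp (hS hp')
  obtain ⟨ha, hb⟩ := hsmall _ hp
  obtain ⟨ha', hb'⟩ := hsmall _ hp'
  -- `m - c = b - a` is small, and `m - b` moves by `b' - b` only
  have hfac : 2 * ((b - a) * (m - b)) = m ^ 2 - n := by
    linear_combination two_mul_sub_mul_sub_eq h1 h2 + 2 * (m - b) * h1
  have hfac' : 2 * ((b' - a') * (m - b')) = m ^ 2 - n := by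
    linear_combination two_mul_sub_mul_sub_eq h1' h2' + 2 * (m - b') * h1'
  have hcube : (4 * N) ^ 3 ≤ |((b - a : ℤ) : ℝ) * ((m - b : ℤ) : ℝ)| := by
    have hK' : |((m ^ 2 - n : ℤ) : ℝ)| = 2 * |((b - a : ℤ) : ℝ) * ((m - b : ℤ) : ℝ)| := by
      rw [← hfac]; push_cast; rw [abs_mul, abs_two]
    nlinarith [pow_le_pow_right₀ hN (by norm_num : 3 ≤ 4)]
  obtain ⟨hd, he⟩ := eq_and_eq_of_mul_eq_mul_of_abs_lt (mul_left_cancel₀ two_ne_zero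
      (hfac.trans hfac'.symm)) (by push_cast; exact abs_sub_lt_of_abs_lt_two_mul hb ha)
    (by push_cast; exact abs_sub_lt_of_abs_lt_two_mul hb' ha')
    (by push_cast; rw [sub_sub_sub_cancel_left]; exact abs_sub_lt_of_abs_lt_two_mul hb' hb) hcube
  simp only [Prod.mk.injEq]
  omega

lemma subsingleton_of_abs_fst_lt_of_abs_thd_lt {S : Set (ℤ × ℤ × ℤ)} (hS : S ⊆ solutions m n)
    {N : ℝ} (hN : 1 ≤ N) (hK : 128 * N ^ 4 < |((m ^ 2 - n : ℤ) : ℝ)|)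
    (hsmall : ∀ p ∈ S, |(p.1 : ℝ)| < 2 * N ∧ |(p.2.2 : ℝ)| < 2 * N) : S.Subsingleton := by
  let σ : ℤ × ℤ × ℤ → ℤ × ℤ × ℤ := Prod.map id Prod.swap
  have hσ : (σ ⁻¹' S).Subsingleton := by
    refine subsingleton_of_abs_fst_lt_of_abs_snd_lt (fun ⟨a, b, c⟩ hp => ?_) hN hK
      fun p hp => hsmall _ hp
    obtain ⟨h1, h2⟩ := mem_solutions.mp (hS hp : (a, c, b) ∈ solutions m n)
    exact ⟨by linear_combination h1, by linear_combination h2⟩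
  have hσS := hσ.image σ
  rwa [Set.image_preimage_eq S (Prod.map_surjective.mpr ⟨Function.surjective_id,
    Prod.swap_surjective⟩)] at hσS

lemma ncard_le_nine_of_abs_snd_lt_of_abs_thd_lt {S : Set (ℤ × ℤ × ℤ)} (hS : S ⊆ solutions m n)
    {N : ℝ} (hN : 1 ≤ N) (hK : 128 * N ^ 4 < |((m ^ 2 - n : ℤ) : ℝ)|)
    (hsmall : ∀ p ∈ S, |(p.2.1 : ℝ)| < 2 * N ∧ |(p.2.2 : ℝ)| < 2 * N) : S.ncard ≤ 9 := by
  -- `|m - a|` and `|c - b|` are the same for all solutions, so the signs determine a solution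
  have hinj : Set.InjOn (fun p => (SignType.sign (m - p.1), SignType.sign (p.2.2 - p.2.1))) S := by
    rintro ⟨a, b, c⟩ hp ⟨a', b', c'⟩ hp' hsign
    simp only [Prod.mk.injEq] at hsign
    obtain ⟨h1, h2⟩ := mem_solutions.mp (hS hp)
    obtain ⟨h1', h2'⟩ := mem_solutions.mp (hS hp')
    obtain ⟨hb, hc⟩ := hsmall _ hp
    obtain ⟨hb', hc'⟩ := hsmall _ hp'
    have hL : (4 * N) ^ 4 ≤ |((m - a : ℤ) : ℝ) ^ 2 - ((c - b : ℤ) : ℝ) ^ 2| := by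
      rw [← Int.cast_pow, ← Int.cast_pow, ← Int.cast_sub, sub_sq_sub_sub_sq_eq h1 h2,
        Int.cast_mul, abs_mul, Int.cast_ofNat, abs_two]
      linarith
    obtain ⟨hs, ht⟩ := abs_eq_abs_of_sq_sub_sq_eq
      ((sub_sq_sub_sub_sq_eq h1 h2).trans (sub_sq_sub_sub_sq_eq h1' h2').symm)
      (by push_cast; exact abs_sub_lt_of_abs_lt_two_mul hc hb)
      (by push_cast; exact abs_sub_lt_of_abs_lt_two_mul hc' hb') (by linarith) hL
    have hs' : m - a = m - a' := by rw [← sign_mul_abs (m - a), hsign.1, hs, sign_mul_abs]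
    have ht' : c - b = c' - b' := by rw [← sign_mul_abs (c - b), hsign.2, ht, sign_mul_abs]
    simp only [Prod.mk.injEq]
    omega
  calc S.ncard ≤ (Set.univ : Set (SignType × SignType)).ncard :=
        Set.ncard_le_ncard_of_injOn _ (fun _ _ => trivial) hinj Set.finite_univ
    _ = 9 := by rw [Set.ncard_univ, Nat.card_eq_fintype_card]; rfl

end Solutions

lemma le_and_le_of_max_min_le {α : Type*} [LinearOrder α] {x y z N : α}
    (h : max (min x y) (min (max x y) z) ≤ N) :
    (x ≤ N ∧ y ≤ N) ∨ (x ≤ N ∧ z ≤ N) ∨ (y ≤ N ∧ z ≤ N) := by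
  simp only [max_le_iff, min_le_iff] at h
  tauto

def dyadicSolutions (m n : ℤ) (N1 N2 N3 : ℝ) : Set (ℤ × ℤ × ℤ) :=
  {p : ℤ × ℤ × ℤ |
    p.2.1 + p.2.2 - p.1 = m ∧ p.2.1 ^ 2 + p.2.2 ^ 2 - p.1 ^ 2 = n ∧
    N1 ≤ |(p.1 : ℝ)| ∧ |(p.1 : ℝ)| < 2 * N1 ∧
    N2 ≤ |(p.2.1 : ℝ)| ∧ |(p.2.1 : ℝ)| < 2 * N2 ∧
    N3 ≤ |(p.2.2 : ℝ)| ∧ |(p.2.2 : ℝ)| < 2 * N3}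

section DyadicSolutions

variable {m n : ℤ} {N1 N2 N3 : ℝ}

lemma dyadicSolutions_subset_solutions : dyadicSolutions m n N1 N2 N3 ⊆ solutions m n :=
  fun _ hp => ⟨hp.1, hp.2.1⟩

lemma ncard_dyadicSolutions_le_nine (hN1 : 1 ≤ N1) (hN2 : 1 ≤ N2)
    (hK : 128 * max (min N1 N2) (min (max N1 N2) N3) ^ 4 < |((m ^ 2 - n : ℤ) : ℝ)|) :
    (dyadicSolutions m n N1 N2 N3).ncard ≤ 9 := by
  set N := max (min N1 N2) (min (max N1 N2) N3)
  have hN : 1 ≤ N := (le_min hN1 hN2).trans (le_max_left _ _)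
  have hS : dyadicSolutions m n N1 N2 N3 ⊆ solutions m n := dyadicSolutions_subset_solutions
  rcases le_and_le_of_max_min_le (le_refl N) with ⟨h1, h2⟩ | ⟨h1, h3⟩ | ⟨h2, h3⟩
  · have hsub := subsingleton_of_abs_fst_lt_of_abs_snd_lt hS hN hK fun p hp =>
      ⟨by linarith [hp.2.2.2.1], by linarith [hp.2.2.2.2.2.1]⟩
    linarith [(Set.ncard_le_one hsub.finite).mpr hsub]
  · have hsub := subsingleton_of_abs_fst_lt_of_abs_thd_lt hS hN hK fun p hp =>
      ⟨by linarith [hp.2.2.2.1], by linarith [hp.2.2.2.2.2.2.2]⟩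
    linarith [(Set.ncard_le_one hsub.finite).mpr hsub]
  · exact ncard_le_nine_of_abs_snd_lt_of_abs_thd_lt hS hN hK fun p hp =>
      ⟨by linarith [hp.2.2.2.2.2.1], by linarith [hp.2.2.2.2.2.2.2]⟩

end DyadicSolutions

theorem stmt4 (ε : ℝ) (hε : 0 < ε) :
    ∃ C : ℝ, 0 < C ∧ ∀ (m n : ℤ), m ^ 2 - n ≠ 0 →
      ∀ N1 N2 N3 : ℝ, 1 ≤ N1 → 1 ≤ N2 → 1 ≤ N3 →
      (Set.ncard {p : ℤ × ℤ × ℤ |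
        p.2.1 + p.2.2 - p.1 = m ∧ p.2.1 ^ 2 + p.2.2 ^ 2 - p.1 ^ 2 = n ∧
        N1 ≤ |(p.1 : ℝ)| ∧ |(p.1 : ℝ)| < 2 * N1 ∧
        N2 ≤ |(p.2.1 : ℝ)| ∧ |(p.2.1 : ℝ)| < 2 * N2 ∧
        N3 ≤ |(p.2.2 : ℝ)| ∧ |(p.2.2 : ℝ)| < 2 * N3} : ℝ)
        ≤ C * (max (min N1 N2) (min (max N1 N2) N3)) ^ ε := by
  obtain ⟨C, hC, hτ⟩ := Nat.exists_card_divisors_le_mul_rpow (ε := ε / 4) (by positivity)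
  refine ⟨2 * C * 128 ^ (ε / 4) + 9, by positivity, fun m n hK N1 N2 N3 hN1 hN2 _ => ?_⟩
  change ((dyadicSolutions m n N1 N2 N3).ncard : ℝ) ≤ _
  set N := max (min N1 N2) (min (max N1 N2) N3)
  have hNε : 1 ≤ N ^ ε := one_le_rpow ((le_min hN1 hN2).trans (le_max_left _ _)) hε.le
  rcases le_or_gt |((m ^ 2 - n : ℤ) : ℝ)| (128 * N ^ 4) with hsmall | hbig
  · have hτK := hτ _ (Int.natAbs_ne_zero.mpr hK)
    rw [Nat.cast_natAbs, Int.cast_abs] at hτK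
    calc ((dyadicSolutions m n N1 N2 N3).ncard : ℝ) ≤ #(m ^ 2 - n).divisors := by
          exact_mod_cast ncard_le_card_divisors dyadicSolutions_subset_solutions hK
      _ = 2 * #(m ^ 2 - n).natAbs.divisors := by rw [Int.card_divisors]; push_cast; rfl
      _ ≤ 2 * (C * |((m ^ 2 - n : ℤ) : ℝ)| ^ (ε / 4)) := by gcongr
      _ ≤ 2 * (C * (128 * N ^ 4) ^ (ε / 4)) := by gcongr
      _ = 2 * C * 128 ^ (ε / 4) * N ^ ε := by
          rw [mul_rpow (by norm_num) (by positivity), ← rpow_natCast, ← rpow_mul (by positivity)]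
          ring_nf
      _ ≤ _ := by nlinarith
  · calc ((dyadicSolutions m n N1 N2 N3).ncard : ℝ) ≤ 9 := by
          exact_mod_cast ncard_dyadicSolutions_le_nine hN1 hN2 hbig
      _ ≤ (2 * C * 128 ^ (ε / 4) + 9) * N ^ ε := by
          nlinarith [show 0 ≤ 2 * C * (128 : ℝ) ^ (ε / 4) by positivity]
end

section
/- Let d1, ..., dm be distinct divisors of a nonzero integer k. Then k is divisible by lcm(d1,...,dm), and |lcm(d1,...,dm)| ≥ (∏_{j=1}^m |d_j|) / (∏_{1≤i<j≤m} |gcd(d_i, d_j)|). -/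
/-!
Induct on the number of divisors. Adjoining `a` to a family with lcm `L` multiplies the
product by `a` and the lcm by `a / gcd a L`, and `gcd a L ∣ ∏ j, gcd a (d j)` because
`L ∣ ∏ j, d j` and `gcd a (x * y) ∣ gcd a x * gcd a y`. Hence
`∏ j, d j ∣ lcm d * ∏_{i < j} gcd (d i) (d j)`, and comparing absolute values gives the bound.
-/

section GCDMonoid

variable {α : Type*} [CommMonoidWithZero α]

theorem gcd_lcm_dvd_mul_gcd [GCDMonoid α] (a b c : α) :
    gcd a (lcm b c) ∣ gcd a b * gcd a c :=
  (gcd_dvd_gcd dvd_rfl (lcm_dvd_mul b c)).trans (gcd_mul_dvd_mul_gcd a b c)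

variable [NormalizedGCDMonoid α]

theorem gcd_finset_lcm_dvd_prod_gcd {ι : Type*} (a : α) (s : Finset ι) (f : ι → α) :
    gcd a (s.lcm f) ∣ ∏ j ∈ s, gcd a (f j) := by
  classical
  induction s using Finset.induction with
  | empty => simp
  | insert b s hb ih =>
    rw [Finset.lcm_insert, Finset.prod_insert hb]
    exact (gcd_lcm_dvd_mul_gcd _ _ _).trans (mul_dvd_mul_left _ ih)

end GCDMonoid

theorem Fin.prod_filter_lt_succ {M : Type*} [CommMonoid M] (m : ℕ)
    (F : Fin (m + 1) → Fin (m + 1) → M) :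
    ∏ p ∈ Finset.univ.filter (fun p : Fin (m + 1) × Fin (m + 1) => p.1 < p.2), F p.1 p.2
      = (∏ j : Fin m, F 0 j.succ) *
        ∏ p ∈ Finset.univ.filter (fun p : Fin m × Fin m => p.1 < p.2), F p.1.succ p.2.succ := by
  rw [Finset.prod_filter, Finset.prod_filter, Fintype.prod_prod_type, Fintype.prod_prod_type,
    Fin.prod_univ_succ]
  congr 1
  · simp [Fin.prod_univ_succ]
  · refine Finset.prod_congr rfl fun i _ => ?_
    simp [Fin.prod_univ_succ, Fin.succ_lt_succ_iff]

theorem prod_dvd_finset_lcm_mul_prod_gcd {α : Type*} [CommMonoidWithZero α]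
    [NormalizedGCDMonoid α] (m : ℕ) (d : Fin m → α) :
    ∏ j, d j ∣ Finset.univ.lcm d *
      ∏ p ∈ Finset.univ.filter (fun p : Fin m × Fin m => p.1 < p.2), gcd (d p.1) (d p.2) := by
  induction m with
  | zero => simp
  | succ n ih =>
    set e : Fin n → α := fun j => d j.succ
    set L := Finset.univ.lcm e
    set G := ∏ p ∈ Finset.univ.filter (fun p : Fin n × Fin n => p.1 < p.2), gcd (e p.1) (e p.2)
    have hL : lcm (d 0) L ∣ Finset.univ.lcm d :=
      lcm_dvd (Finset.dvd_lcm (Finset.mem_univ _))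
        (Finset.lcm_dvd fun j _ => Finset.dvd_lcm (Finset.mem_univ _))
    rw [Fin.prod_univ_succ, Fin.prod_filter_lt_succ n (fun a b => gcd (d a) (d b)), ← mul_assoc]
    calc d 0 * ∏ j, e j
        ∣ d 0 * L * G := by rw [mul_assoc]; exact mul_dvd_mul_left _ (ih e)
      _ ∣ lcm (d 0) L * gcd (d 0) L * G := by
        rw [mul_comm (lcm _ _)]
        exact mul_dvd_mul (gcd_mul_lcm _ _).symm.dvd dvd_rfl
      _ ∣ Finset.univ.lcm d * (∏ j : Fin n, gcd (d 0) (d j.succ)) * G :=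
        mul_dvd_mul (mul_dvd_mul hL (gcd_finset_lcm_dvd_prod_gcd _ _ _)) dvd_rfl

theorem Int.cast_abs_div_le_of_dvd_mul {a b c : ℤ} (h : a ∣ b * c) (hb : b = 0 → a = 0) :
    ((|a| : ℤ) : ℝ) / ((|c| : ℤ) : ℝ) ≤ ((|b| : ℤ) : ℝ) := by
  rcases eq_or_ne c 0 with rfl | hc
  · simp
  rcases eq_or_ne b 0 with rfl | hb'
  · simp [hb rfl]
  have hle : |a| ≤ |b| * |c| := by
    rw [← abs_mul]
    exact Int.le_of_dvd (abs_pos.mpr (mul_ne_zero hb' hc)) ((abs_dvd_abs _ _).mpr h)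
  rw [div_le_iff₀ (by positivity)]
  exact_mod_cast hle

theorem stmt5_general (k : ℤ) (m : ℕ) (d : Fin m → ℤ)
    (hdvd : ∀ j, d j ∣ k) :
    (Finset.univ.lcm d) ∣ k ∧
    (∏ j, ((|d j| : ℤ) : ℝ)) /
        (∏ p ∈ Finset.univ.filter (fun p : Fin m × Fin m => p.1 < p.2),
          ((|gcd (d p.1) (d p.2)| : ℤ) : ℝ))
      ≤ ((|Finset.univ.lcm d| : ℤ) : ℝ) := by
  refine ⟨Finset.lcm_dvd fun j _ => hdvd j, ?_⟩
  have hlcm : Finset.univ.lcm d = 0 → ∏ j, d j = 0 := by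
    rw [Finset.lcm_eq_zero_iff]
    rintro ⟨j, hj, hdj⟩
    exact Finset.prod_eq_zero hj hdj
  simpa only [Finset.abs_prod, Int.cast_prod] using
    Int.cast_abs_div_le_of_dvd_mul (prod_dvd_finset_lcm_mul_prod_gcd m d) hlcm

theorem stmt5 (k : ℤ) (hk : k ≠ 0) (m : ℕ) (d : Fin m → ℤ)
    (hinj : Function.Injective d) (hne : ∀ j, d j ≠ 0) (hdvd : ∀ j, d j ∣ k) :
    (Finset.univ.lcm d) ∣ k ∧
    (∏ j, ((|d j| : ℤ) : ℝ)) /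
        (∏ p ∈ Finset.univ.filter (fun p : Fin m × Fin m => p.1 < p.2),
          ((|gcd (d p.1) (d p.2)| : ℤ) : ℝ))
      ≤ ((|Finset.univ.lcm d| : ℤ) : ℝ) :=
  stmt5_general k m d hdvd
end

section
/- Suppose d1, ..., dm are distinct positive divisors of a positive integer k, each satisfying d_j ≥ k^ε, and pairwise |d_i - d_j| ≤ 2ρ with ρ ≤ k^δ where δ = ε⁴ and m ≥ C·ε^{-2} for an appropriate constant C. Then k ≥ k^{εm - δm²}, which is impossible for k sufficiently large; hence the number of such divisors is at most m - 1. -/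
/-! Since `gcd(dᵢ, dⱼ)` divides `dᵢ - dⱼ`, pairwise gcds of the divisors are at most `2ρ`. Adding
the divisors one at a time to an lcm, each new one shares at most `(2ρ)^(#previous)` with it, so
the product of any `n` of them is at most `lcm · (2ρ)^(n choose 2) ≤ k · (2k^(ε⁴))^(n choose 2)`,
while it is at least `k^(εn)`. Hence `k^(nε - 1 - ε⁴ (n choose 2)) ≤ 2^(n choose 2)`. For a
suitable `n ≤ 4/ε²` (`n = 2` if `ε ≥ 3/5`, `n = ⌈2/ε⌉` otherwise) the exponent is positive, which
is impossible for large `k`. -/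

open Finset Filter

theorem Finset.gcd_lcm_dvd_prod_gcd {α ι : Type*} [CommMonoidWithZero α]
    [NormalizedGCDMonoid α] [DecidableEq ι] (a : α) (s : Finset ι) (f : ι → α) :
    GCDMonoid.gcd a (s.lcm f) ∣ ∏ i ∈ s, GCDMonoid.gcd a (f i) := by
  induction s using Finset.induction_on with
  | empty => simp
  | insert b s hb ih =>
    rw [lcm_insert, prod_insert hb]
    calc GCDMonoid.gcd a (GCDMonoid.lcm (f b) (s.lcm f)) ∣ GCDMonoid.gcd a (f b * s.lcm f) :=
          gcd_dvd_gcd dvd_rfl (lcm_dvd_mul _ _)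
      _ ∣ GCDMonoid.gcd a (f b) * GCDMonoid.gcd a (s.lcm f) := gcd_mul_dvd_mul_gcd _ _ _
      _ ∣ GCDMonoid.gcd a (f b) * ∏ i ∈ s, GCDMonoid.gcd a (f i) := mul_dvd_mul_left _ ih

theorem Finset.prod_le_lcm_mul_pow_of_gcd_le {ι : Type*} [DecidableEq ι] (s : Finset ι)
    (d : ι → ℕ) {B : ℕ} (hB : Set.Pairwise s fun i j ↦ (d i).gcd (d j) ≤ B) :
    ∏ i ∈ s, d i ≤ s.lcm d * B ^ ((#s).choose 2) := by
  induction s using Finset.induction_on with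
  | empty => simp
  | insert b s hb ih =>
    rw [coe_insert, Set.pairwise_insert] at hB
    rw [prod_insert hb, lcm_insert, lcm_eq_nat_lcm, card_insert_of_notMem hb,
      Nat.choose_succ_succ', Nat.choose_one_right, pow_add]
    rcases (d b).eq_zero_or_pos with hdb | hdb
    · simp [hdb]
    have hgcd : (d b).gcd (s.lcm d) ≤ B ^ #s := by
      refine (Nat.le_of_dvd (prod_pos fun i _ ↦ Nat.gcd_pos_of_pos_left _ hdb)
        (gcd_lcm_dvd_prod_gcd (d b) s d)).trans (prod_le_pow_card _ _ _ fun i hi ↦ ?_)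
      exact (hB.2 i hi (ne_of_mem_of_not_mem hi hb).symm).1
    calc d b * ∏ i ∈ s, d i ≤ d b * (s.lcm d * B ^ ((#s).choose 2)) :=
          Nat.mul_le_mul_left _ (ih hB.1)
      _ = (d b).lcm (s.lcm d) * (d b).gcd (s.lcm d) * B ^ ((#s).choose 2) := by
          rw [mul_comm (Nat.lcm _ _), Nat.gcd_mul_lcm, mul_assoc]
      _ ≤ (d b).lcm (s.lcm d) * B ^ #s * B ^ ((#s).choose 2) := by gcongr
      _ = _ := by ring

theorem Nat.gcd_le_abs_sub {a b : ℕ} (h : a ≠ b) : (a.gcd b : ℤ) ≤ |(a : ℤ) - b| := by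
  have hdvd : (a.gcd b : ℤ) ∣ (a : ℤ) - b :=
    _root_.dvd_sub (Int.natCast_dvd_natCast.2 (Nat.gcd_dvd_left a b))
      (Int.natCast_dvd_natCast.2 (Nat.gcd_dvd_right a b))
  exact Int.le_of_dvd (abs_pos.2 (sub_ne_zero.2 (by exact_mod_cast h))) ((dvd_abs _ _).2 hdvd)

theorem prod_le_mul_pow_of_dvd_of_abs_sub_le {ι : Type*} [Fintype ι] {k : ℕ} (hk : k ≠ 0)
    {d : ι → ℕ} (hd : Function.Injective d) (hdvd : ∀ i, d i ∣ k) {B : ℝ} (hB0 : 0 ≤ B)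
    (hB : ∀ i j, |(d i : ℝ) - d j| ≤ B) :
    (∏ i, d i : ℝ) ≤ k * B ^ ((Fintype.card ι).choose 2) := by
  classical
  have hgcd : Set.Pairwise (univ : Finset ι) fun i j ↦ (d i).gcd (d j) ≤ ⌊B⌋₊ := by
    intro i _ j _ hij
    refine Nat.le_floor ((?_ : ((d i).gcd (d j) : ℝ) ≤ |(d i : ℝ) - d j|).trans (hB i j))
    exact_mod_cast Nat.gcd_le_abs_sub (hd.ne hij)
  have hlcm : univ.lcm d ≤ k := Nat.le_of_dvd (Nat.pos_of_ne_zero hk) (lcm_dvd fun i _ ↦ hdvd i)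
  have hprod := (prod_le_lcm_mul_pow_of_gcd_le univ d hgcd).trans (Nat.mul_le_mul_right _ hlcm)
  rw [card_univ] at hprod
  calc (∏ i, d i : ℝ) ≤ k * (⌊B⌋₊ : ℝ) ^ ((Fintype.card ι).choose 2) := by exact_mod_cast hprod
    _ ≤ k * B ^ ((Fintype.card ι).choose 2) := by gcongr; exact Nat.floor_le hB0

theorem rpow_le_two_pow_of_dvd_of_abs_sub_le {ι : Type*} [Fintype ι] {k : ℕ} (hk : k ≠ 0)
    {ε δ ρ : ℝ} (hρ : 0 ≤ ρ) (hρk : ρ ≤ (k : ℝ) ^ δ)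
    {d : ι → ℕ} (hd : Function.Injective d) (hdvd : ∀ i, d i ∣ k)
    (hge : ∀ i, (k : ℝ) ^ ε ≤ d i) (hclose : ∀ i j, |(d i : ℝ) - d j| ≤ 2 * ρ) :
    (k : ℝ) ^ (Fintype.card ι * ε - 1 - δ * (Fintype.card ι).choose 2) ≤
      2 ^ (Fintype.card ι).choose 2 := by
  set n := Fintype.card ι
  set p := n.choose 2
  have hk0 : (0 : ℝ) < k := by positivity
  have hprod : ((k : ℝ) ^ ε) ^ n ≤ k * (2 * (k : ℝ) ^ δ) ^ p :=
    calc ((k : ℝ) ^ ε) ^ n = ∏ _i : ι, (k : ℝ) ^ ε := by rw [prod_const, card_univ]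
      _ ≤ ∏ i, (d i : ℝ) := prod_le_prod (fun _ _ ↦ by positivity) fun i _ ↦ hge i
      _ ≤ k * (2 * ρ) ^ p :=
          prod_le_mul_pow_of_dvd_of_abs_sub_le hk hd hdvd (by positivity) hclose
      _ ≤ k * (2 * (k : ℝ) ^ δ) ^ p := by gcongr
  have hexp : (k : ℝ) ^ (n * ε - 1 - δ * p) = ((k : ℝ) ^ ε) ^ n / (k * ((k : ℝ) ^ δ) ^ p) := by
    rw [Real.rpow_sub hk0, Real.rpow_sub hk0, Real.rpow_one, div_div, mul_comm (n : ℝ),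
      Real.rpow_mul hk0.le, Real.rpow_mul hk0.le, Real.rpow_natCast, Real.rpow_natCast]
  rw [hexp, div_le_iff₀ (by positivity)]
  exact hprod.trans_eq (by ring)

theorem exists_nat_le_four_div_sq_and_pos {ε : ℝ} (hε : 0 < ε) (hε1 : ε < 1) :
    ∃ n : ℕ, (n : ℝ) ≤ 4 / ε ^ 2 ∧ 0 < n * ε - 1 - ε ^ 4 * n.choose 2 := by
  rcases le_or_gt (3 / 5) ε with hε35 | hε35
  · refine ⟨2, ?_, ?_⟩
    · rw [le_div_iff₀ (by positivity)]; norm_num; nlinarith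
    · have hcubic : 0 < ε ^ 3 + ε ^ 2 + ε - 1 := by nlinarith
      norm_num; nlinarith [mul_pos (sub_pos.2 hε1) hcubic]
  · -- `n ε ∈ [2, 2 + ε)`, so `ε⁴ n (n - 1) / 2 < ε² (2 + ε) < 1 ≤ n ε - 1`.
    set n := ⌈2 / ε⌉₊
    have hlo : 2 ≤ n * ε := (div_le_iff₀ hε).1 (Nat.le_ceil _)
    have hhi : n * ε < 2 + ε := by
      have := Nat.ceil_lt_add_one (by positivity : 0 ≤ 2 / ε)
      have := mul_lt_mul_of_pos_right this hε
      rwa [add_mul, div_mul_cancel₀ _ hε.ne', one_mul] at this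
    refine ⟨n, ?_, ?_⟩
    · rw [le_div_iff₀ (by positivity)]; nlinarith
    · have hprod : (n * ε) * (n * ε - ε) ≤ (2 + ε) * 2 := by nlinarith
      have hsq : ε ^ 2 ≤ 9 / 25 := by nlinarith
      have hquad : ε ^ 4 * (n.choose 2 : ℝ) = ε ^ 2 * ((n * ε) * (n * ε - ε)) / 2 := by
        rw [Nat.cast_choose_two]; ring
      rw [hquad]
      nlinarith [mul_le_mul hsq hprod (by nlinarith) (by norm_num)]

theorem stmt6 (ε : ℝ) (hε : 0 < ε) (hε1 : ε < 1) :
    ∃ C : ℝ, 0 < C ∧ ∃ K : ℕ, ∀ k : ℕ, K ≤ k →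
      ∀ m : ℕ, C / ε ^ 2 ≤ (m : ℝ) →
      ∀ ρ : ℝ, 0 < ρ → ρ ≤ (k : ℝ) ^ (ε ^ 4) →
      ¬ ∃ d : Fin m → ℕ, Function.Injective d ∧
          (∀ j, d j ∣ k) ∧ (∀ j, (k : ℝ) ^ ε ≤ (d j : ℝ)) ∧
          (∀ i j, |(d i : ℝ) - (d j : ℝ)| ≤ 2 * ρ) := by
  obtain ⟨n, hn, he⟩ := exists_nat_le_four_div_sq_and_pos hε hε1
  obtain ⟨K, hK⟩ := eventually_atTop.1 <|
    (((tendsto_rpow_atTop he).comp tendsto_natCast_atTop_atTop).eventually_gt_atTop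
      ((2 : ℝ) ^ n.choose 2)).and (eventually_ne_atTop 0)
  refine ⟨4, by norm_num, K, fun k hk m hm ρ hρ hρk ⟨d, hd, hdvd, hge, hclose⟩ ↦ ?_⟩
  obtain ⟨hlarge, hk0⟩ := hK k hk
  have hnm : n ≤ m := by exact_mod_cast hn.trans hm
  have hsmall := rpow_le_two_pow_of_dvd_of_abs_sub_le hk0 hρ.le hρk
    (hd.comp (Fin.castLE_injective hnm)) (fun _ ↦ hdvd _) (fun _ ↦ hge _) fun _ _ ↦ hclose _ _
  rw [Fintype.card_fin] at hsmall
  exact hsmall.not_gt hlarge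
end

section
/- Let k, k1, k2, k3 ∈ ℤ with k2 + k3 - k1 = k, |k2| ≥ |k3|, and suppose (k1,k2,k3) lies in the region 𝕏_L ∪ 𝕏_N (i.e. either |k2| < 2^{-20}|k|, or the complement of the high-high, low-low and semilinear regions). Then |Δ| ~ ⟨k⟩⟨k1⟩, where Δ = k² + k1² - k2² - k3² = 2(k-k2)(k-k3), i.e. there exist absolute constants 0 < c < C with c·⟨k⟩⟨k1⟩ ≤ |Δ| ≤ C·⟨k⟩⟨k1⟩. -/
/-!
On `𝕏_L ∪ 𝕏_N` the frequency `k3` is less than half of both `|k|` and `|k1|`. Since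
`k - k2 = k3 - k1`, the resonance function factors as `Δ = 2 (k - k3)(k3 - k1)`, and each factor
is comparable to `|k|`, resp. `|k1|`. Finally `|n| ≤ ⟨n⟩ ≤ 2 |n|` for `n ≠ 0`.
-/

/-- The Japanese bracket `⟨k⟩ = √(1 + k²)` of an integer. -/
noncomputable def jb (k : ℤ) : ℝ := Real.sqrt (1 + (k : ℝ) ^ 2)

theorem sq_add_sq_sub_sq_sub_sq_eq {R : Type*} [CommRing R] {k k1 k2 k3 : R}
    (h : k2 + k3 - k1 = k) :
    k ^ 2 + k1 ^ 2 - k2 ^ 2 - k3 ^ 2 = 2 * ((k - k3) * (k3 - k1)) := by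
  subst h; ring

section Resonance

variable {α : Type*} [CommRing α] [LinearOrder α] [IsStrictOrderedRing α]

theorem abs_le_two_mul_abs_sub_of_two_mul_abs_le {a e : α} (h : 2 * |e| ≤ |a|) :
    |a| ≤ 2 * |a - e| ∧ 2 * |a - e| ≤ 4 * |a| := by
  have := abs_sub_abs_le_abs_sub a e
  have := abs_sub a e
  constructor <;> linarith

theorem abs_two_mul_sub_mul_sub_bounds {a b e : α} (ha : 2 * |e| ≤ |a|) (hb : 2 * |e| ≤ |b|) :
    |a| * |b| ≤ 2 * |2 * ((a - e) * (e - b))| ∧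
      |2 * ((a - e) * (e - b))| ≤ 8 * (|a| * |b|) := by
  obtain ⟨ha₁, ha₂⟩ := abs_le_two_mul_abs_sub_of_two_mul_abs_le ha
  obtain ⟨hb₁, hb₂⟩ := abs_le_two_mul_abs_sub_of_two_mul_abs_le hb
  rw [abs_mul, abs_mul, abs_two, abs_sub_comm e]
  constructor
  · nlinarith [mul_le_mul ha₁ hb₁ (abs_nonneg _) (by positivity)]
  · nlinarith [mul_le_mul ha₂ hb₂ (by positivity) (by positivity)]

end Resonance

theorem abs_le_jb (n : ℤ) : |(n : ℝ)| ≤ jb n := by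
  rw [jb, ← Real.sqrt_sq_eq_abs]
  exact Real.sqrt_le_sqrt (by linarith)

theorem jb_le_two_mul_abs {n : ℤ} (hn : n ≠ 0) : jb n ≤ 2 * |(n : ℝ)| := by
  have h1 : (1 : ℝ) ≤ |(n : ℝ)| := by exact_mod_cast Int.one_le_abs hn
  rw [jb, Real.sqrt_le_left (by positivity)]
  nlinarith [sq_abs (n : ℝ)]

theorem abs_mul_abs_le_jb_mul_jb (k k1 : ℤ) : |(k : ℝ)| * |(k1 : ℝ)| ≤ jb k * jb k1 :=
  mul_le_mul (abs_le_jb k) (abs_le_jb k1) (abs_nonneg _) ((abs_nonneg _).trans (abs_le_jb k))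

theorem jb_mul_jb_le {k k1 : ℤ} (hk : k ≠ 0) (hk1 : k1 ≠ 0) :
    jb k * jb k1 ≤ 4 * (|(k : ℝ)| * |(k1 : ℝ)|) := by
  have := mul_le_mul (jb_le_two_mul_abs hk) (jb_le_two_mul_abs hk1)
    ((abs_nonneg _).trans (abs_le_jb k1)) (by positivity)
  linarith

theorem two_mul_abs_lt_of_lowLow {k k1 k2 k3 : ℤ} (hsum : k2 + k3 - k1 = k)
    (habs : |k3| ≤ |k2|) (hL : 2 ^ 20 * |k2| < |k|) : 2 * |k3| < |k| ∧ 2 * |k3| < |k1| := by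
  have := hsum ▸ abs_sub (k2 + k3) k1
  have := abs_add_le k2 k3
  have := abs_nonneg k2
  omega

theorem two_mul_abs_lt_of_not_highHigh_of_not_semilinear {k k1 k3 : ℤ}
    (hH : ¬ |k| ≤ 2 ^ 20 * |k3|) (hS : ¬ (|k1| ≤ 2 ^ 10 * |k3| ∧ 2 ^ 20 * |k3| < |k|)) :
    2 * |k3| < |k| ∧ 2 * |k3| < |k1| := by
  have := abs_nonneg k3
  omega

theorem stmt8 :
    ∃ c C : ℝ, 0 < c ∧ c < C ∧
      ∀ k k1 k2 k3 : ℤ, k2 + k3 - k1 = k → |k3| ≤ |k2| → k ≠ k2 → k ≠ k3 →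
      ((2 ^ 20 * |k2| < |k|) ∨
        (¬ (|k| ≤ 2 ^ 20 * |k3|) ∧ ¬ (2 ^ 20 * |k2| < |k|) ∧
         ¬ (|k1| ≤ 2 ^ 10 * |k3| ∧ 2 ^ 20 * |k3| < |k|))) →
      c * (jb k * jb k1) ≤ |((k ^ 2 + k1 ^ 2 - k2 ^ 2 - k3 ^ 2 : ℤ) : ℝ)| ∧
      |((k ^ 2 + k1 ^ 2 - k2 ^ 2 - k3 ^ 2 : ℤ) : ℝ)| ≤ C * (jb k * jb k1) := by
  refine ⟨1 / 8, 8, by norm_num, by norm_num, ?_⟩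
  intro k k1 k2 k3 hsum habs _ _ hregion
  obtain ⟨hk, hk1⟩ : 2 * |k3| < |k| ∧ 2 * |k3| < |k1| := by
    rcases hregion with hL | ⟨hH, -, hS⟩
    · exact two_mul_abs_lt_of_lowLow hsum habs hL
    · exact two_mul_abs_lt_of_not_highHigh_of_not_semilinear hH hS
  have hk0 : k ≠ 0 := abs_pos.mp ((by positivity : 0 ≤ 2 * |k3|).trans_lt hk)
  have hk10 : k1 ≠ 0 := abs_pos.mp ((by positivity : 0 ≤ 2 * |k3|).trans_lt hk1)
  have hΔ : ((k ^ 2 + k1 ^ 2 - k2 ^ 2 - k3 ^ 2 : ℤ) : ℝ) = 2 * ((k - k3) * (k3 - k1)) := by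
    push_cast
    exact sq_add_sq_sub_sq_sub_sq_eq (by exact_mod_cast hsum)
  obtain ⟨hlow, hup⟩ := abs_two_mul_sub_mul_sub_bounds (a := (k : ℝ)) (b := k1) (e := k3)
    (by exact_mod_cast hk.le) (by exact_mod_cast hk1.le)
  have := abs_mul_abs_le_jb_mul_jb k k1
  have := jb_mul_jb_le hk0 hk10
  rw [hΔ]
  constructor <;> linarith
end

section
/- Let 1 < q̃ < q < ∞ and b ∈ ℝ with b < 1 < b + 1/q. Let g : ℝ → ℂ be smooth with g(0) = 0 and define ĝ₂(σ) = 1_{|σ|<T^{-1}} ĝ(σ). Then for φ Schwartz with φ(0-neighborhood) cut-off structure and φ_T(t) = φ(t/T), the convolution satisfies |(ĝ₂ * φ̂_T)(λ)| ≲_B T⟨Tλ⟩^{-B} ∫_ℝ min(1, |Tσ|)|ĝ(σ)| dσ for every B > 0. -/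
/-!
Since `∫ G = 0`, one may subtract `T φ̂(Tλ) ∫ G` and estimate the kernel
`1_{|Tσ|<1} φ̂(Tλ - Tσ) - φ̂(Tλ)` pointwise by `⟨Tλ⟩^{-B} min(1, |Tσ|)`: for `|Tσ| < 1` by the
mean value theorem, using the decay of `φ̂'` on the unit ball around `Tλ`, and otherwise by the
decay of `φ̂` itself.
-/

open MeasureTheory

lemma sqrt_one_add_sq_rpow_le_one_add_abs_pow {B : ℝ} {k : ℕ} (hBk : B ≤ k) (y : ℝ) :
    √(1 + y ^ 2) ^ B ≤ (1 + |y|) ^ k := by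
  have h1 : 1 ≤ √(1 + y ^ 2) := Real.one_le_sqrt.mpr (by nlinarith)
  calc √(1 + y ^ 2) ^ B ≤ √(1 + y ^ 2) ^ (k : ℝ) := Real.rpow_le_rpow_of_exponent_le h1 hBk
    _ = √(1 + y ^ 2) ^ k := Real.rpow_natCast _ _
    _ ≤ (1 + |y|) ^ k := by
      gcongr
      simpa using sqrt_one_add_norm_sq_le y

lemma le_mul_sqrt_one_add_sq_rpow_neg {A C B : ℝ} {k : ℕ} (hBk : B ≤ k) (hA : 0 ≤ A) {y : ℝ}
    (h : (1 + |y|) ^ k * A ≤ C) : A ≤ C * √(1 + y ^ 2) ^ (-B) := by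
  have hpos : 0 < √(1 + y ^ 2) := Real.sqrt_pos.mpr (by positivity)
  rw [Real.rpow_neg hpos.le, ← div_eq_mul_inv, le_div_iff₀ (Real.rpow_pos_of_pos hpos B)]
  calc A * √(1 + y ^ 2) ^ B ≤ A * (1 + |y|) ^ k :=
        mul_le_mul_of_nonneg_left (sqrt_one_add_sq_rpow_le_one_add_abs_pow hBk y) hA
    _ ≤ C := by linarith

namespace SchwartzMap

variable {F : Type*} [NormedAddCommGroup F] [NormedSpace ℝ F]

lemma exists_one_add_abs_pow_mul_norm_le (f : 𝓢(ℝ, F)) (k : ℕ) :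
    ∃ C, ∀ x : ℝ, (1 + |x|) ^ k * ‖f x‖ ≤ C :=
  ⟨_, fun x => by
    simpa using one_add_le_sup_seminorm_apply (𝕜 := ℝ) (m := (k, 0)) le_rfl le_rfl f x⟩

lemma exists_one_add_abs_pow_mul_norm_sub_le (f : 𝓢(ℝ, F)) (k : ℕ) :
    ∃ C, ∀ x h : ℝ, |h| ≤ 1 → (1 + |x|) ^ k * ‖f (x + h) - f x‖ ≤ C * |h| := by
  obtain ⟨C, hC⟩ := exists_one_add_abs_pow_mul_norm_le (derivCLM ℝ F f) k
  refine ⟨2 ^ k * C, fun x h hh => ?_⟩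
  have hderiv : ∀ y ∈ Metric.closedBall x 1, (1 + |x|) ^ k * ‖deriv f y‖ ≤ 2 ^ k * C := by
    intro y hy
    have hxy : 1 + |x| ≤ 2 * (1 + |y|) := by
      have := abs_sub_abs_le_abs_sub x y
      rw [Metric.mem_closedBall, Real.dist_eq, abs_sub_comm] at hy
      linarith [abs_nonneg y]
    calc (1 + |x|) ^ k * ‖deriv f y‖ ≤ (2 * (1 + |y|)) ^ k * ‖deriv f y‖ := by gcongr
      _ = 2 ^ k * ((1 + |y|) ^ k * ‖derivCLM ℝ F f y‖) := by rw [mul_pow, derivCLM_apply]; ring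
      _ ≤ 2 ^ k * C := by gcongr; exact hC y
  have hpow : 0 < (1 + |x|) ^ k := by positivity
  have hmvt := (convex_closedBall x 1).norm_image_sub_le_of_norm_deriv_le
    (fun y _ => f.differentiableAt) (fun y hy => (le_div_iff₀' hpow).mpr (hderiv y hy))
    (Metric.mem_closedBall_self zero_le_one)
    (show x + h ∈ Metric.closedBall x 1 by simpa [Metric.mem_closedBall, Real.dist_eq] using hh)
  rw [add_sub_cancel_left, Real.norm_eq_abs] at hmvt
  rw [← le_div_iff₀' hpow]
  calc ‖f (x + h) - f x‖ ≤ 2 ^ k * C / (1 + |x|) ^ k * |h| := hmvt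
    _ = 2 ^ k * C * |h| / (1 + |x|) ^ k := by ring

lemma exists_norm_le_sqrt_one_add_sq_rpow_neg (f : 𝓢(ℝ, F)) (B : ℝ) :
    ∃ C, ∀ x : ℝ, ‖f x‖ ≤ C * √(1 + x ^ 2) ^ (-B) := by
  obtain ⟨C, hC⟩ := f.exists_one_add_abs_pow_mul_norm_le ⌈B⌉₊
  exact ⟨C, fun x => le_mul_sqrt_one_add_sq_rpow_neg (Nat.le_ceil B) (norm_nonneg _) (hC x)⟩

lemma exists_norm_sub_le_sqrt_one_add_sq_rpow_neg (f : 𝓢(ℝ, F)) (B : ℝ) :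
    ∃ C, ∀ x h : ℝ, |h| ≤ 1 → ‖f (x + h) - f x‖ ≤ C * √(1 + x ^ 2) ^ (-B) * |h| := by
  obtain ⟨C, hC⟩ := f.exists_one_add_abs_pow_mul_norm_sub_le ⌈B⌉₊
  refine ⟨C, fun x h hh => ?_⟩
  rw [mul_right_comm]
  exact le_mul_sqrt_one_add_sq_rpow_neg (Nat.le_ceil B) (norm_nonneg _) (hC x h hh)

lemma exists_norm_indicator_smul_comp_sub_le (f : 𝓢(ℝ, F)) (B : ℝ) :
    ∃ C, 0 < C ∧ ∀ T : ℝ, 0 < T → ∀ lam σ : ℝ,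
      ‖{σ : ℝ | |σ| < T⁻¹}.indicator (fun σ => T • f (T * (lam - σ))) σ - T • f (T * lam)‖ ≤
        C * T * √(1 + (T * lam) ^ 2) ^ (-B) * min 1 |T * σ| := by
  obtain ⟨C₀, hC₀⟩ := f.exists_norm_le_sqrt_one_add_sq_rpow_neg B
  obtain ⟨C₁, hC₁⟩ := f.exists_norm_sub_le_sqrt_one_add_sq_rpow_neg B
  refine ⟨max (max C₀ C₁) 1, by positivity, fun T hT lam σ => ?_⟩
  set S := √(1 + (T * lam) ^ 2) ^ (-B)
  have hS : 0 ≤ S := by positivity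
  have hmem : σ ∈ {σ : ℝ | |σ| < T⁻¹} ↔ |T * σ| < 1 := by
    rw [Set.mem_ofPred_eq, abs_mul, abs_of_pos hT, inv_eq_one_div, lt_div_iff₀' hT]
  by_cases hσ : |T * σ| < 1
  · have hdiff := hC₁ (T * lam) (-(T * σ)) (by rw [abs_neg]; exact hσ.le)
    rw [abs_neg, ← sub_eq_add_neg, ← mul_sub] at hdiff
    rw [Set.indicator_of_mem (hmem.mpr hσ), ← smul_sub, norm_smul, Real.norm_of_nonneg hT.le,
      min_eq_right hσ.le]
    calc T * ‖f (T * (lam - σ)) - f (T * lam)‖ ≤ T * (C₁ * S * |T * σ|) := by gcongr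
      _ ≤ T * (max (max C₀ C₁) 1 * S * |T * σ|) := by
        gcongr; exact le_max_of_le_left (le_max_right _ _)
      _ = _ := by ring
  · rw [Set.indicator_of_notMem (mt hmem.mp hσ), zero_sub, norm_neg, norm_smul,
      Real.norm_of_nonneg hT.le, min_eq_left (not_lt.mp hσ)]
    calc T * ‖f (T * lam)‖ ≤ T * (C₀ * S) := by gcongr; exact hC₀ _
      _ ≤ T * (max (max C₀ C₁) 1 * S) := by gcongr; exact le_max_of_le_left (le_max_left _ _)
      _ = _ := by ring

end SchwartzMap

lemma norm_integral_mul_le_integral_norm_mul_norm_sub {α 𝕜 : Type*} [MeasurableSpace α]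
    {μ : Measure α} [RCLike 𝕜] {G k : α → 𝕜} (hG : Integrable G μ) (hG0 : ∫ x, G x ∂μ = 0)
    (hGk : Integrable (fun x => G x * k x) μ) (c : 𝕜) :
    ‖∫ x, G x * k x ∂μ‖ ≤ ∫ x, ‖G x‖ * ‖k x - c‖ ∂μ := by
  have : ∫ x, G x * k x ∂μ = ∫ x, G x * (k x - c) ∂μ := by
    simp_rw [mul_sub]
    rw [integral_sub hGk (hG.mul_const c), integral_mul_const, hG0, zero_mul, sub_zero]
  rw [this]
  simpa only [norm_mul] using norm_integral_le_integral_norm (fun x => G x * (k x - c))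

theorem stmt12_general (φhat : SchwartzMap ℝ ℂ) (B : ℝ) :
    ∃ C : ℝ, 0 < C ∧ ∀ T : ℝ, 0 < T → T ≤ 1 →
      ∀ G : ℝ → ℂ, Integrable G → (∫ σ, G σ) = 0 →
      ∀ lam : ℝ,
        ‖∫ σ, Set.indicator {σ : ℝ | |σ| < T⁻¹} G σ * ((T : ℂ) * φhat (T * (lam - σ)))‖ ≤
          C * T * (Real.sqrt (1 + (T * lam) ^ 2)) ^ (-B) *
            ∫ σ, min 1 |T * σ| * ‖G σ‖ := by
  obtain ⟨C, hC, hkernel⟩ := φhat.exists_norm_indicator_smul_comp_sub_le B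
  refine ⟨C, hC, fun T hT _ G hG hG0 lam => ?_⟩
  set s := {σ : ℝ | |σ| < T⁻¹}
  set K : ℝ → ℂ := fun σ => T * φhat (T * (lam - σ))
  have hs : MeasurableSet s := measurableSet_lt continuous_abs.measurable measurable_const
  have hGK : Integrable fun σ => G σ * s.indicator K σ := by
    refine hG.mul_bdd (c := T * SchwartzMap.seminorm ℝ 0 0 φhat)
      ((by fun_prop : Continuous K).aestronglyMeasurable.indicator hs) (.of_forall fun σ => ?_)
    refine (norm_indicator_le_norm_self K σ).trans ?_
    rw [norm_mul, Complex.norm_real, Real.norm_of_nonneg hT.le]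
    exact mul_le_mul_of_nonneg_left (φhat.norm_le_seminorm ℝ _) hT.le
  have hmajorant : Integrable fun σ => min 1 |T * σ| * ‖G σ‖ :=
    hG.norm.bdd_mul (c := 1) (by fun_prop) (.of_forall fun σ => by
      rw [Real.norm_of_nonneg (by positivity)]; exact min_le_left _ _)
  have hswap : ∀ σ, s.indicator G σ * K σ = G σ * s.indicator K σ := fun σ => by
    rw [← Set.indicator_mul_left, Set.indicator_mul_right]
  show ‖∫ σ, s.indicator G σ * K σ‖ ≤ _
  simp_rw [hswap]
  calc _ ≤ ∫ σ, ‖G σ‖ * ‖s.indicator K σ - T * φhat (T * lam)‖ :=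
        norm_integral_mul_le_integral_norm_mul_norm_sub hG hG0 hGK _
    _ ≤ ∫ σ, C * T * √(1 + (T * lam) ^ 2) ^ (-B) * (min 1 |T * σ| * ‖G σ‖) := by
        refine integral_mono_of_nonneg (.of_forall fun σ => by positivity)
          (hmajorant.const_mul _) (.of_forall fun σ => ?_)
        calc ‖G σ‖ * ‖s.indicator K σ - T * φhat (T * lam)‖
            ≤ ‖G σ‖ * (C * T * √(1 + (T * lam) ^ 2) ^ (-B) * min 1 |T * σ|) := by
              gcongr; simpa only [s, K, ← Complex.real_smul] using hkernel T hT lam σ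
          _ = _ := by ring
    _ = _ := integral_const_mul _ _

theorem stmt12 (φhat : SchwartzMap ℝ ℂ) (B : ℝ) (hB : 0 < B) :
    ∃ C : ℝ, 0 < C ∧ ∀ T : ℝ, 0 < T → T ≤ 1 →
      ∀ G : ℝ → ℂ, Integrable G → (∫ σ, G σ) = 0 →
      ∀ lam : ℝ,
        ‖∫ σ, Set.indicator {σ : ℝ | |σ| < T⁻¹} G σ * ((T : ℂ) * φhat (T * (lam - σ)))‖ ≤
          C * T * (Real.sqrt (1 + (T * lam) ^ 2)) ^ (-B) *
            ∫ σ, min 1 |T * σ| * ‖G σ‖ :=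
  stmt12_general φhat B
end

section
/- Let 1 < q̃ < q < ∞ and b < 1 < b + 1/q. For the Schur-type kernel R(λ,σ) = 1_{|σ|≥T^{-1}}·T|φ̂(T(λ-σ))|·⟨λ⟩^b/⟨σ⟩^b with φ Schwartz, the operator f ↦ ∫R(λ,σ)f(σ)dσ is bounded from L^{q̃}(ℝ) to L^q(ℝ) with norm ≲ T^{1/q - 1/q̃}. -/
/-!
For `|σ| ≥ T⁻¹` one has `⟨λ⟩ ≤ ⟨σ⟩ + |λ - σ| ≤ ⟨σ⟩ (1 + T |λ - σ|)`, so for `0 ≤ b ≤ 1` the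
weight `⟨λ⟩ᵇ / ⟨σ⟩ᵇ` is at most `1 + T |λ - σ|`, and the decay of `φ̂` absorbs it: the kernel is
dominated by the convolution kernel `K_T(x) = T A (1 + (T x)²)⁻¹`. Young's convolution inequality
with `1/q̃ + 1/r = 1 + 1/q` bounds the operator by `‖K_T‖_r = A π^{1/r} T^{1 - 1/r}`, and
`T^{1 - 1/r} ≤ T^{1/q - 1/q̃}` since `T ≤ 1`. Young's inequality itself is the three-function Hölder
inequality applied to `K g = (Kʳ gᵖ)^{1/q} (Kʳ)^{1 - 1/p} (gᵖ)^{1/p - 1/q}`, followed by Tonelli.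
-/

open MeasureTheory Real
open scoped ENNReal

theorem ENNReal.lintegral_mul_mul_rpow_le {α : Type*} [MeasurableSpace α] {μ : Measure α}
    {u v w : α → ℝ≥0∞} (hu : AEMeasurable u μ) (hv : AEMeasurable v μ) (hw : AEMeasurable w μ)
    {a b c : ℝ} (ha : 0 ≤ a) (hb : 0 ≤ b) (hc : 0 ≤ c) (habc : a + b + c = 1) :
    ∫⁻ x, u x ^ a * v x ^ b * w x ^ c ∂μ ≤
      (∫⁻ x, u x ∂μ) ^ a * (∫⁻ x, v x ∂μ) ^ b * (∫⁻ x, w x ∂μ) ^ c := by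
  have := ENNReal.lintegral_prod_norm_pow_le (μ := μ) Finset.univ (f := ![u, v, w])
    (p := ![a, b, c]) (by simp [Fin.forall_fin_succ, hu, hv, hw])
    (by simpa [Fin.sum_univ_three] using habc) (by simp [Fin.forall_fin_succ, ha, hb, hc])
  simpa [Fin.prod_univ_three, mul_assoc] using this

theorem ENNReal.mul_eq_young_factorization {p q r : ℝ} (hp : 1 ≤ p) (hpq : p ≤ q)
    (hr : 1 / p + 1 / r = 1 + 1 / q) (a c : ℝ≥0∞) :
    a * c = (a ^ r * c ^ p) ^ (1 / q) * (a ^ r) ^ (1 - 1 / p) * (c ^ p) ^ (1 / p - 1 / q) := by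
  have hp0 : 0 < p := by linarith
  have hq0 : 0 < q := by linarith
  have h1p : 1 / p ≤ 1 := by rw [div_le_one hp0]; exact hp
  have hqp : 1 / q ≤ 1 / p := one_div_le_one_div_of_le hp0 hpq
  have hr0 : 0 < r := by
    have : 0 < 1 / r := by have := one_div_pos.2 hq0; linarith
    exact one_div_pos.1 this
  have hK : r * (1 / q) + r * (1 - 1 / p) = 1 := by
    field_simp at hr ⊢; linarith
  have hg : p * (1 / q) + p * (1 / p - 1 / q) = 1 := by field_simp; ring
  rw [ENNReal.mul_rpow_of_nonneg _ _ (by positivity), ← ENNReal.rpow_mul, ← ENNReal.rpow_mul,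
    ← ENNReal.rpow_mul, ← ENNReal.rpow_mul, mul_right_comm (a ^ _), mul_assoc,
    ← ENNReal.rpow_add_of_nonneg _ _ (by positivity) (by nlinarith),
    ← ENNReal.rpow_add_of_nonneg _ _ (by positivity) (by nlinarith), hK, hg,
    ENNReal.rpow_one, ENNReal.rpow_one]

section Young

variable {G : Type*} [MeasurableSpace G] [AddGroup G] [MeasurableAdd₂ G] [MeasurableNeg G]
  {μ : Measure G} {F H : G → ℝ≥0∞}

theorem aemeasurable_mul_sub [SFinite μ] (hF : Measurable F) (hH : AEMeasurable H μ) :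
    AEMeasurable (fun z : G × G => F (z.1 - z.2) * H z.2) (μ.prod μ) :=
  (hF.comp (measurable_fst.sub measurable_snd)).aemeasurable.mul
    (hH.comp_quasiMeasurePreserving Measure.quasiMeasurePreserving_snd)

theorem lintegral_lintegral_mul_sub [SFinite μ] [μ.IsAddRightInvariant] (hF : Measurable F)
    (hH : AEMeasurable H μ) :
    ∫⁻ x, ∫⁻ y, F (x - y) * H y ∂μ ∂μ = (∫⁻ x, F x ∂μ) * ∫⁻ y, H y ∂μ := by
  rw [lintegral_lintegral_swap (aemeasurable_mul_sub hF hH), ← lintegral_const_mul'' _ hH]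
  refine lintegral_congr fun y => ?_
  rw [← lintegral_sub_right_eq_self F y]
  exact lintegral_mul_const _ (hF.comp (measurable_sub_const y))

variable [μ.IsAddLeftInvariant] [μ.IsNegInvariant] {p q r : ℝ}

theorem lintegral_mul_sub_le_holder (hF : Measurable F) (hH : AEMeasurable H μ) (hp : 1 ≤ p)
    (hpq : p ≤ q) (hr : 1 / p + 1 / r = 1 + 1 / q) (x : G) :
    ∫⁻ y, F (x - y) * H y ∂μ ≤ (∫⁻ y, F (x - y) ^ r * H y ^ p ∂μ) ^ (1 / q) *
      ((∫⁻ y, F y ^ r ∂μ) ^ (1 - 1 / p) * (∫⁻ y, H y ^ p ∂μ) ^ (1 / p - 1 / q)) := by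
  have hp0 : 0 < p := by linarith
  have hq0 : 0 < q := by linarith
  have hFx : Measurable fun y => F (x - y) ^ r :=
    (hF.comp (measurable_const.sub measurable_id)).pow_const r
  calc ∫⁻ y, F (x - y) * H y ∂μ
      = ∫⁻ y, (F (x - y) ^ r * H y ^ p) ^ (1 / q) * (F (x - y) ^ r) ^ (1 - 1 / p) *
          (H y ^ p) ^ (1 / p - 1 / q) ∂μ :=
        lintegral_congr fun y => ENNReal.mul_eq_young_factorization hp hpq hr _ _
    _ ≤ (∫⁻ y, F (x - y) ^ r * H y ^ p ∂μ) ^ (1 / q) * (∫⁻ y, F (x - y) ^ r ∂μ) ^ (1 - 1 / p) *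
          (∫⁻ y, H y ^ p ∂μ) ^ (1 / p - 1 / q) :=
        ENNReal.lintegral_mul_mul_rpow_le (hFx.aemeasurable.mul (hH.pow_const p))
          hFx.aemeasurable (hH.pow_const p) (by positivity)
          (by rw [sub_nonneg, div_le_one hp0]; exact hp)
          (sub_nonneg.2 (one_div_le_one_div_of_le hp0 hpq)) (by ring)
    _ = _ := by
        rw [lintegral_sub_left_eq_self (fun y => F y ^ r) x, mul_assoc]

theorem lintegral_conv_rpow_le [SFinite μ] [μ.IsAddRightInvariant] (hF : Measurable F)
    (hH : AEMeasurable H μ) (hp : 1 ≤ p) (hpq : p ≤ q) (hr : 1 / p + 1 / r = 1 + 1 / q) :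
    (∫⁻ x, (∫⁻ y, F (x - y) * H y ∂μ) ^ q ∂μ) ^ (1 / q) ≤
      (∫⁻ x, F x ^ r ∂μ) ^ (1 / r) * (∫⁻ x, H x ^ p ∂μ) ^ (1 / p) := by
  have hp0 : 0 < p := by linarith
  have hq0 : 0 < q := by linarith
  set IF := ∫⁻ x, F x ^ r ∂μ
  set IH := ∫⁻ x, H x ^ p ∂μ
  set c := IF ^ (1 - 1 / p) * IH ^ (1 / p - 1 / q)
  have hX : AEMeasurable (fun x => ∫⁻ y, F (x - y) ^ r * H y ^ p ∂μ) μ :=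
    (aemeasurable_mul_sub (hF.pow_const r) (hH.pow_const p)).lintegral_prod_right'
  have hint : ∫⁻ x, (∫⁻ y, F (x - y) * H y ∂μ) ^ q ∂μ ≤ IF * IH * c ^ q :=
    calc ∫⁻ x, (∫⁻ y, F (x - y) * H y ∂μ) ^ q ∂μ
        ≤ ∫⁻ x, ((∫⁻ y, F (x - y) ^ r * H y ^ p ∂μ) ^ (1 / q) * c) ^ q ∂μ :=
          lintegral_mono fun x => ENNReal.rpow_le_rpow
            (lintegral_mul_sub_le_holder hF hH hp hpq hr x) hq0.le
      _ = ∫⁻ x, (∫⁻ y, F (x - y) ^ r * H y ^ p ∂μ) * c ^ q ∂μ := by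
          simp only [ENNReal.mul_rpow_of_nonneg _ _ hq0.le, ← ENNReal.rpow_mul,
            one_div_mul_cancel hq0.ne', ENNReal.rpow_one]
      _ = IF * IH * c ^ q := by
          rw [lintegral_mul_const'' _ hX,
            lintegral_lintegral_mul_sub (hF.pow_const r) (hH.pow_const p)]
  calc (∫⁻ x, (∫⁻ y, F (x - y) * H y ∂μ) ^ q ∂μ) ^ (1 / q)
      ≤ (IF * IH * c ^ q) ^ (1 / q) := ENNReal.rpow_le_rpow hint (by positivity)
    _ = IF ^ (1 / q + (1 - 1 / p)) * IH ^ (1 / q + (1 / p - 1 / q)) := by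
        have h1p : 1 / p ≤ 1 := by rw [div_le_one hp0]; exact hp
        have hqp : 1 / q ≤ 1 / p := one_div_le_one_div_of_le hp0 hpq
        rw [ENNReal.mul_rpow_of_nonneg _ _ (by positivity), ← ENNReal.rpow_mul,
          mul_one_div_cancel hq0.ne', ENNReal.rpow_one,
          ENNReal.mul_rpow_of_nonneg _ _ (by positivity),
          ENNReal.rpow_add_of_nonneg _ _ (by positivity) (by linarith),
          ENNReal.rpow_add_of_nonneg _ _ (by positivity) (by linarith)]
        ring
    _ = IF ^ (1 / r) * IH ^ (1 / p) := by
        congr 2 <;> linarith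

theorem eLpNorm_integral_kernel_mul_le {k : G → G → ℝ} {K : G → ℝ} (hK : Measurable K)
    (hk : ∀ x y, |k x y| ≤ K (x - y)) {f : G → ℝ} (hf : AEStronglyMeasurable f μ) [SFinite μ]
    [μ.IsAddRightInvariant] (hp : 1 ≤ p) (hpq : p ≤ q) (hr : 1 / p + 1 / r = 1 + 1 / q) :
    eLpNorm (fun x => ∫ y, k x y * f y ∂μ) (ENNReal.ofReal q) μ ≤
      (∫⁻ x, ENNReal.ofReal (K x) ^ r ∂μ) ^ (1 / r) * eLpNorm f (ENNReal.ofReal p) μ := by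
  have hp0 : 0 < p := by linarith
  have hq0 : 0 < q := by linarith
  rw [eLpNorm_eq_lintegral_rpow_enorm_toReal (by simpa using hq0) ENNReal.ofReal_ne_top,
    eLpNorm_eq_lintegral_rpow_enorm_toReal (by simpa using hp0) ENNReal.ofReal_ne_top,
    ENNReal.toReal_ofReal hq0.le, ENNReal.toReal_ofReal hp0.le]
  calc (∫⁻ x, ‖∫ y, k x y * f y ∂μ‖ₑ ^ q ∂μ) ^ (1 / q)
      ≤ (∫⁻ x, (∫⁻ y, ENNReal.ofReal (K (x - y)) * ‖f y‖ₑ ∂μ) ^ q ∂μ) ^ (1 / q) := by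
        gcongr with x
        refine (enorm_integral_le_lintegral_enorm _).trans (lintegral_mono fun y => ?_)
        rw [enorm_mul, Real.enorm_eq_ofReal_abs]
        gcongr
        exact hk x y
    _ ≤ _ := lintegral_conv_rpow_le (ENNReal.measurable_ofReal.comp hK) hf.enorm hp hpq hr

end Young

theorem Real.sqrt_one_add_sq_le_add_abs_sub (x y : ℝ) :
    √(1 + x ^ 2) ≤ √(1 + y ^ 2) + |x - y| := by
  have hy : |y| ≤ √(1 + y ^ 2) := by
    rw [← Real.sqrt_sq_eq_abs]; exact Real.sqrt_le_sqrt (by linarith)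
  have hyx : y * (x - y) ≤ √(1 + y ^ 2) * |x - y| :=
    calc y * (x - y) ≤ |y| * |x - y| := by rw [← abs_mul]; exact le_abs_self _
      _ ≤ _ := by gcongr
  rw [Real.sqrt_le_left (by positivity), add_sq, Real.sq_sqrt (by positivity), sq_abs]
  nlinarith

theorem Real.sqrt_one_add_sq_rpow_div_le {T b x y : ℝ} (hT : 0 < T) (hy : T⁻¹ ≤ |y|)
    (hb0 : 0 ≤ b) (hb1 : b ≤ 1) :
    √(1 + x ^ 2) ^ b / √(1 + y ^ 2) ^ b ≤ 1 + T * |x - y| := by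
  have hv : 0 < √(1 + y ^ 2) := Real.sqrt_pos.2 (by positivity)
  have hvT : 1 ≤ T * √(1 + y ^ 2) := by
    have : |y| ≤ √(1 + y ^ 2) := by
      rw [← Real.sqrt_sq_eq_abs]; exact Real.sqrt_le_sqrt (by linarith)
    rw [← inv_le_iff_one_le_mul₀' hT]; linarith
  set ρ := √(1 + x ^ 2) / √(1 + y ^ 2)
  have hρ : ρ - 1 ≤ T * |x - y| := by
    rw [sub_le_iff_le_add', div_le_iff₀ hv]
    nlinarith [Real.sqrt_one_add_sq_le_add_abs_sub x y, abs_nonneg (x - y)]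
  rw [← Real.div_rpow (by positivity) hv.le]
  calc ρ ^ b ≤ 1 + b * (ρ - 1) := by
        simpa using rpow_one_add_le_one_add_mul_self (s := ρ - 1)
          (by linarith [show 0 ≤ ρ by positivity]) hb0 hb1
    _ ≤ 1 + T * |x - y| := by
        nlinarith [mul_le_mul_of_nonneg_left hρ hb0, mul_nonneg (sub_nonneg.2 hb1)
          (mul_nonneg hT.le (abs_nonneg (x - y)))]

theorem SchwartzMap.exists_abs_mul_one_add_abs_le (φ : SchwartzMap ℝ ℝ) :
    ∃ A, 0 < A ∧ ∀ y, |φ y| * (1 + |y|) ≤ A * (1 + y ^ 2)⁻¹ := by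
  set S := (Finset.Iic (3, 0)).sup (fun m => SchwartzMap.seminorm ℝ m.1 m.2) φ
  refine ⟨2 ^ 3 * S + 1, by positivity, fun y => ?_⟩
  have hdecay : (1 + |y|) ^ 3 * |φ y| ≤ 2 ^ 3 * S := by
    simpa using SchwartzMap.one_add_le_sup_seminorm_apply (𝕜 := ℝ) (m := (3, 0)) le_rfl le_rfl φ y
  rw [← div_eq_mul_inv, le_div_iff₀ (by positivity)]
  calc |φ y| * (1 + |y|) * (1 + y ^ 2) ≤ (1 + |y|) ^ 3 * |φ y| := by
        nlinarith [abs_nonneg y, abs_nonneg (φ y), sq_abs y,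
          mul_nonneg (abs_nonneg (φ y)) (abs_nonneg y)]
    _ ≤ 2 ^ 3 * S + 1 := by linarith

theorem abs_indicator_kernel_le {φ : ℝ → ℝ} {A T b : ℝ}
    (hφ : ∀ y, |φ y| * (1 + |y|) ≤ A * (1 + y ^ 2)⁻¹) (hT : 0 < T) (hb0 : 0 ≤ b) (hb1 : b ≤ 1)
    (x y : ℝ) :
    |Set.indicator {y : ℝ | T⁻¹ ≤ |y|}
        (fun y => T * |φ (T * (x - y))| * √(1 + x ^ 2) ^ b / √(1 + y ^ 2) ^ b) y| ≤
      T * A * (1 + (T * (x - y)) ^ 2)⁻¹ := by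
  have hA : 0 ≤ A * (1 + (T * (x - y)) ^ 2)⁻¹ :=
    (by positivity : (0 : ℝ) ≤ |φ (T * (x - y))| * (1 + |T * (x - y)|)).trans (hφ _)
  by_cases hy : T⁻¹ ≤ |y|
  · rw [Set.indicator_of_mem (by exact hy), abs_of_nonneg (by positivity), mul_div_assoc,
      mul_assoc, mul_assoc T A]
    refine mul_le_mul_of_nonneg_left ?_ hT.le
    calc |φ (T * (x - y))| * (√(1 + x ^ 2) ^ b / √(1 + y ^ 2) ^ b)
        ≤ |φ (T * (x - y))| * (1 + |T * (x - y)|) := by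
          rw [abs_mul, abs_of_pos hT]
          gcongr
          exact Real.sqrt_one_add_sq_rpow_div_le hT hy hb0 hb1
      _ ≤ A * (1 + (T * (x - y)) ^ 2)⁻¹ := hφ _
  · rw [Set.indicator_of_notMem (by exact hy), abs_zero, mul_assoc]
    exact mul_nonneg hT.le hA

theorem lintegral_ofReal_cauchy_rpow_le {A T r : ℝ} (hA : 0 ≤ A) (hT : 0 < T) (hr : 1 ≤ r) :
    (∫⁻ x, ENNReal.ofReal (T * A * (1 + (T * x) ^ 2)⁻¹) ^ r) ^ (1 / r) ≤
      ENNReal.ofReal (A * π ^ (1 / r) * T ^ (1 - 1 / r)) := by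
  have hr0 : 0 < r := by linarith
  have hpt : ∀ x : ℝ, ENNReal.ofReal (T * A * (1 + (T * x) ^ 2)⁻¹) ^ r ≤
      ENNReal.ofReal ((T * A) ^ r * (1 + (T * x) ^ 2)⁻¹) := fun x => by
    rw [ENNReal.ofReal_rpow_of_nonneg (by positivity) hr0.le,
      Real.mul_rpow (by positivity) (by positivity)]
    gcongr
    exact Real.rpow_le_self_of_le_one (by positivity)
      (inv_le_one_of_one_le₀ (le_add_of_nonneg_right (sq_nonneg _))) hr
  have hint : ∫⁻ x, ENNReal.ofReal ((T * A) ^ r * (1 + (T * x) ^ 2)⁻¹) =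
      ENNReal.ofReal ((T * A) ^ r * (T⁻¹ * π)) := by
    rw [← ofReal_integral_eq_lintegral_ofReal
      ((integrable_inv_one_add_sq.comp_mul_left' hT.ne').const_mul _)
      (Filter.Eventually.of_forall fun x => by positivity), integral_const_mul,
      Measure.integral_comp_mul_left (fun y : ℝ => (1 + y ^ 2)⁻¹) T,
      integral_univ_inv_one_add_sq, abs_of_pos (inv_pos.2 hT), smul_eq_mul]
  have hroot : ((T * A) ^ r * (T⁻¹ * π)) ^ (1 / r) = A * π ^ (1 / r) * T ^ (1 - 1 / r) := by
    rw [Real.mul_rpow (by positivity) (by positivity), one_div,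
      Real.rpow_rpow_inv (by positivity) hr0.ne', Real.mul_rpow (by positivity) pi_nonneg,
      Real.inv_rpow hT.le, Real.rpow_sub hT, Real.rpow_one]
    ring
  calc (∫⁻ x, ENNReal.ofReal (T * A * (1 + (T * x) ^ 2)⁻¹) ^ r) ^ (1 / r)
      ≤ (ENNReal.ofReal ((T * A) ^ r * (T⁻¹ * π))) ^ (1 / r) := by
        rw [← hint]; gcongr with x; exact hpt x
    _ = ENNReal.ofReal (A * π ^ (1 / r) * T ^ (1 - 1 / r)) := by
        rw [ENNReal.ofReal_rpow_of_nonneg (by positivity) (by positivity), hroot]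

theorem stmt13 (q qt b : ℝ) (h1 : 1 < qt) (h2 : qt < q) (hb : b < 1)
    (hbq : 1 < b + 1 / q) (φhat : SchwartzMap ℝ ℝ) :
    ∃ C : ℝ, 0 < C ∧ ∀ T : ℝ, 0 < T → T ≤ 1 →
      ∀ f : ℝ → ℝ, MemLp f (ENNReal.ofReal qt) volume →
      eLpNorm
        (fun lam => ∫ σ, (Set.indicator {σ : ℝ | T⁻¹ ≤ |σ|}
          (fun σ => T * |φhat (T * (lam - σ))| *
            (Real.sqrt (1 + lam ^ 2)) ^ b / (Real.sqrt (1 + σ ^ 2)) ^ b) σ) * f σ)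
        (ENNReal.ofReal q) volume
      ≤ ENNReal.ofReal (C * T ^ (1 / q - 1 / qt)) *
          eLpNorm f (ENNReal.ofReal qt) volume := by
  have hq : 1 / q < 1 := (div_lt_one (by linarith)).2 (by linarith)
  have hqqt : 1 / q < 1 / qt := one_div_lt_one_div_of_lt (by linarith) h2
  have hqt : 1 / qt < 1 := (div_lt_one (by linarith)).2 h1
  set r := (1 + 1 / q - 1 / qt)⁻¹
  have hr : 1 / qt + 1 / r = 1 + 1 / q := by simp only [r, one_div, inv_inv]; ring
  have hr1 : 1 ≤ r := one_le_inv₀ (by linarith) |>.2 (by linarith)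
  obtain ⟨A, hA, hφ⟩ := φhat.exists_abs_mul_one_add_abs_le
  refine ⟨A * π ^ (1 / r), by positivity, fun T hT hT1 f hf => ?_⟩
  calc _ ≤ (∫⁻ x, ENNReal.ofReal (T * A * (1 + (T * x) ^ 2)⁻¹) ^ r) ^ (1 / r) *
        eLpNorm f (ENNReal.ofReal qt) volume :=
        eLpNorm_integral_kernel_mul_le (by fun_prop)
          (abs_indicator_kernel_le hφ hT (by linarith) hb.le) hf.1 h1.le h2.le hr
    _ ≤ ENNReal.ofReal (A * π ^ (1 / r) * T ^ (1 - 1 / r)) *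
        eLpNorm f (ENNReal.ofReal qt) volume := by
        gcongr
        exact lintegral_ofReal_cauchy_rpow_le hA.le hT hr1
    _ ≤ _ := by
        gcongr ENNReal.ofReal (_ * ?_) * _
        exact Real.rpow_le_rpow_of_exponent_ge hT hT1 (by linarith)
end
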